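/- arXiv:2201.02291 — 3 statements merged into one kernel-verified Lean document; each statement's English description precedes it below -/
import Mathlib

section
/- (Upper bound in Theorem 1.) Let h_1, …, h_L be vectors in ℂ^M, let Q_l denote the orthogonal projection onto the orthogonal complement of span{h_j : j ≠ l}, and let P > 0. If f_1, …, f_L in ℂ^M satisfy the ISI zero-forcing condition ⟨h_j, f_l⟩ = 0 for all j ≠ l and the power constraint ∑_{l=1}^L ‖f_l‖² ≤ P, then |∑_{l=1}^L ⟨h_l, f_l⟩|² ≤ P · ∑_{l=1}^L ‖Q_l h_l‖². -/
open scoped ComplexInnerProductSpace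

/-- `Qproj h l` is the orthogonal projection of `ℂ^M` onto the orthogonal complement of
`span {h j : j ≠ l}`. -/
noncomputable def Qproj {M L : ℕ} (h : Fin L → EuclideanSpace ℂ (Fin M)) (l : Fin L)
    (x : EuclideanSpace ℂ (Fin M)) : EuclideanSpace ℂ (Fin M) :=
  (Submodule.orthogonalProjectionOnto ((Submodule.span ℂ (h '' {j | j ≠ l}))ᗮ) x : EuclideanSpace ℂ (Fin M))

/-- Upper bound in Theorem 1: under the ISI zero-forcing condition and the power constraint
`∑ l ‖f l‖² ≤ P`, one has `|∑ l ⟨h l, f l⟩|² ≤ P ∑ l ‖Q_l h_l‖²`. -/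
theorem stmt2 {M L : ℕ} (h f : Fin L → EuclideanSpace ℂ (Fin M)) (P : ℝ) (hP : 0 < P)
    (hZF : ∀ j l : Fin L, j ≠ l → ⟪h j, f l⟫ = 0)
    (hpow : ∑ l, ‖f l‖ ^ 2 ≤ P) :
    ‖∑ l, ⟪h l, f l⟫‖ ^ 2 ≤ P * ∑ l, ‖Qproj h l (h l)‖ ^ 2 := by
  have hmem : ∀ l, f l ∈ (Submodule.span ℂ (h '' {j | j ≠ l}))ᗮ := by
    intro l
    rw [Submodule.mem_orthogonal]
    intro u hu
    induction hu using Submodule.span_induction with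
    | mem x hx =>
      obtain ⟨j, hj, rfl⟩ := hx
      exact hZF j l hj
    | zero => simp
    | add x y _ _ hx hy => simp [inner_add_left, hx, hy]
    | smul c x _ hx => simp [inner_smul_left, hx]
  have key : ∀ l, ⟪h l, f l⟫ = ⟪Qproj h l (h l), f l⟫ := by
    intro l
    have := Submodule.inner_starProjection_left_eq_right
      ((Submodule.span ℂ (h '' {j | j ≠ l}))ᗮ) (h l) (f l)
    rw [Submodule.starProjection_eq_self_iff.mpr (hmem l)] at this
    exact this.symm
  calc ‖∑ l, ⟪h l, f l⟫‖ ^ 2 ≤ (∑ l, ‖Qproj h l (h l)‖ * ‖f l‖) ^ 2 := by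
        apply pow_le_pow_left₀ (norm_nonneg _)
        calc ‖∑ l, ⟪h l, f l⟫‖ ≤ ∑ l, ‖⟪h l, f l⟫‖ := norm_sum_le _ _
          _ ≤ ∑ l, ‖Qproj h l (h l)‖ * ‖f l‖ := by
              apply Finset.sum_le_sum
              intro l _
              rw [key l]
              exact norm_inner_le_norm _ _
    _ ≤ (∑ l, ‖Qproj h l (h l)‖ ^ 2) * ∑ l, ‖f l‖ ^ 2 :=
        Finset.sum_mul_sq_le_sq_mul_sq _ _ _
    _ ≤ (∑ l, ‖Qproj h l (h l)‖ ^ 2) * P := by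
        apply mul_le_mul_of_nonneg_left hpow
        positivity
    _ = P * ∑ l, ‖Qproj h l (h l)‖ ^ 2 := mul_comm _ _
end

section
/- (Theorem 1.) Let h_1, …, h_L be vectors in ℂ^M, let Q_l denote the orthogonal projection onto the orthogonal complement of span{h_j : j ≠ l}, let P > 0, and suppose ∑_{l=1}^L ‖Q_l h_l‖² > 0. Then P · ∑_{l=1}^L ‖Q_l h_l‖² is the greatest element of the set of values |∑_{l=1}^L ⟨h_l, f_l⟩|² over all families f_1, …, f_L in ℂ^M satisfying ⟨h_j, f_l⟩ = 0 for all j ≠ l and ∑_{l=1}^L ‖f_l‖² ≤ P; the maximum is attained by f_l = √P · Q_l h_l / √(∑_{l'=1}^L ‖Q_{l'} h_{l'}‖²). -/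
open scoped ComplexInnerProductSpace

lemma mem_orthogonal_span_iff {E : Type*} [NormedAddCommGroup E] [InnerProductSpace ℂ E]
    (s : Set E) (v : E) :
    v ∈ (Submodule.span ℂ s)ᗮ ↔ ∀ u ∈ s, ⟪u, v⟫ = 0 := by
  rw [Submodule.mem_orthogonal]
  constructor
  · intro H u hu; exact H u (Submodule.subset_span hu)
  · intro H u hu
    induction hu using Submodule.span_induction with
    | mem x hx => exact H x hx
    | zero => simp
    | add x y _ _ hx hy => simp [inner_add_left, hx, hy]
    | smul c x _ hx => simp [inner_smul_left, hx]

lemma Qproj_mem {M L : ℕ} (h : Fin L → EuclideanSpace ℂ (Fin M)) (l : Fin L)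
    (x : EuclideanSpace ℂ (Fin M)) :
    Qproj h l x ∈ (Submodule.span ℂ (h '' {j | j ≠ l}))ᗮ :=
  (Submodule.orthogonalProjectionOnto _ x).2

/-- If `f ∈ (span {h j : j ≠ l})ᗮ` then `⟪h l, f⟫ = ⟪Q_l h_l, f⟫`. -/
lemma inner_Qproj {M L : ℕ} (h : Fin L → EuclideanSpace ℂ (Fin M)) (l : Fin L)
    (f : EuclideanSpace ℂ (Fin M))
    (hf : f ∈ (Submodule.span ℂ (h '' {j | j ≠ l}))ᗮ) :
    ⟪h l, f⟫ = ⟪Qproj h l (h l), f⟫ := by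
  have := Submodule.starProjection_inner_eq_zero (K := (Submodule.span ℂ (h '' {j | j ≠ l}))ᗮ)
    (h l) f hf
  have h2 : ⟪h l - Qproj h l (h l), f⟫ = 0 := this
  rw [inner_sub_left, sub_eq_zero] at h2
  exact h2

lemma inner_Qproj_self {M L : ℕ} (h : Fin L → EuclideanSpace ℂ (Fin M)) (l : Fin L) :
    ⟪h l, Qproj h l (h l)⟫ = (‖Qproj h l (h l)‖ ^ 2 : ℝ) := by
  rw [inner_Qproj h l _ (Qproj_mem h l (h l)), inner_self_eq_norm_sq_to_K]
  norm_cast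

/-- Theorem 1: `P ∑ l ‖Q_l h_l‖²` is the greatest value of `|∑ l ⟨h l, f l⟩|²` over all
families `f` satisfying the ISI-ZF condition and the power constraint, and the maximum is
attained by `f l = √P • Q_l h_l / √(∑ l' ‖Q_{l'} h_{l'}‖²)`. -/
theorem stmt4 {M L : ℕ} (h : Fin L → EuclideanSpace ℂ (Fin M)) (P : ℝ) (hP : 0 < P)
    (hS : 0 < ∑ l, ‖Qproj h l (h l)‖ ^ 2) :
    IsGreatest {x : ℝ | ∃ f : Fin L → EuclideanSpace ℂ (Fin M),
        (∀ j l : Fin L, j ≠ l → ⟪h j, f l⟫ = 0) ∧ (∑ l, ‖f l‖ ^ 2 ≤ P) ∧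
        x = ‖∑ l, ⟪h l, f l⟫‖ ^ 2}
      (P * ∑ l, ‖Qproj h l (h l)‖ ^ 2) ∧
    ‖∑ l, ⟪h l, (Real.sqrt P / Real.sqrt (∑ l', ‖Qproj h l' (h l')‖ ^ 2)) • Qproj h l (h l)⟫‖ ^ 2
      = P * ∑ l, ‖Qproj h l (h l)‖ ^ 2 := by
  set S : ℝ := ∑ l, ‖Qproj h l (h l)‖ ^ 2 with hSdef
  set c : ℝ := Real.sqrt P / Real.sqrt S with hc
  have hc_pos : 0 < c := div_pos (Real.sqrt_pos.2 hP) (Real.sqrt_pos.2 hS)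
  -- the value at the candidate maximizer
  have key : (∑ l, ⟪h l, (c : ℝ) • Qproj h l (h l)⟫) = ((c * S : ℝ) : ℂ) := by
    have : ∀ l, ⟪h l, (c : ℝ) • Qproj h l (h l)⟫ = ((c * ‖Qproj h l (h l)‖ ^ 2 : ℝ) : ℂ) := by
      intro l
      rw [RCLike.real_smul_eq_coe_smul (K := ℂ), inner_smul_real_right, inner_Qproj_self]
      push_cast [Complex.real_smul]
      ring
    simp_rw [this]
    push_cast [Finset.mul_sum]
    simp [hSdef, Finset.mul_sum]
  have hval : ‖∑ l, ⟪h l, (c : ℝ) • Qproj h l (h l)⟫‖ ^ 2 = P * S := by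
    rw [key]
    rw [Complex.norm_real, Real.norm_eq_abs, sq_abs, mul_pow, hc, div_pow,
      Real.sq_sqrt hP.le, Real.sq_sqrt hS.le]
    field_simp
  refine ⟨⟨⟨fun l => (c : ℝ) • Qproj h l (h l), ?_, ?_, hval.symm ▸ rfl⟩, ?_⟩, hval⟩
  · -- ZF condition
    intro j l hjl
    show ⟪h j, c • Qproj h l (h l)⟫ = 0
    rw [RCLike.real_smul_eq_coe_smul (K := ℂ), inner_smul_real_right]
    have : ⟪h j, Qproj h l (h l)⟫ = 0 := by
      exact (mem_orthogonal_span_iff _ _).1 (Qproj_mem h l (h l)) (h j) ⟨j, hjl, rfl⟩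
    rw [this, smul_zero]
  · -- power constraint
    have : ∀ l : Fin L, ‖(c : ℝ) • Qproj h l (h l)‖ ^ 2 = c ^ 2 * ‖Qproj h l (h l)‖ ^ 2 := by
      intro l; rw [norm_smul]; simp [mul_pow, abs_of_pos hc_pos, Real.norm_eq_abs]
    simp_rw [this, ← Finset.mul_sum, ← hSdef]
    rw [hc, div_pow, Real.sq_sqrt hP.le, Real.sq_sqrt hS.le]
    rw [div_mul_cancel₀ _ hS.ne']
  · -- upper bound
    rintro x ⟨f, hZF, hpow, rfl⟩
    have hfmem : ∀ l, f l ∈ (Submodule.span ℂ (h '' {j | j ≠ l}))ᗮ := by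
      intro l
      rw [mem_orthogonal_span_iff]
      rintro u ⟨j, hj, rfl⟩
      exact hZF j l hj
    have step1 : ‖∑ l, ⟪h l, f l⟫‖ ≤ ∑ l, ‖Qproj h l (h l)‖ * ‖f l‖ := by
      calc ‖∑ l, ⟪h l, f l⟫‖ ≤ ∑ l, ‖⟪h l, f l⟫‖ := norm_sum_le _ _
        _ ≤ ∑ l, ‖Qproj h l (h l)‖ * ‖f l‖ := by
            apply Finset.sum_le_sum
            intro l _
            rw [inner_Qproj h l (f l) (hfmem l)]
            exact norm_inner_le_norm _ _
    have step2 : (∑ l, ‖Qproj h l (h l)‖ * ‖f l‖) ^ 2 ≤ S * ∑ l, ‖f l‖ ^ 2 :=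
      Finset.sum_mul_sq_le_sq_mul_sq _ _ _
    have hnn : (0:ℝ) ≤ ∑ l, ‖Qproj h l (h l)‖ * ‖f l‖ :=
      Finset.sum_nonneg fun l _ => mul_nonneg (norm_nonneg _) (norm_nonneg _)
    calc ‖∑ l, ⟪h l, f l⟫‖ ^ 2 ≤ (∑ l, ‖Qproj h l (h l)‖ * ‖f l‖) ^ 2 := by
          exact pow_le_pow_left₀ (norm_nonneg _) step1 2
      _ ≤ S * ∑ l, ‖f l‖ ^ 2 := step2
      _ ≤ S * P := by exact mul_le_mul_of_nonneg_left hpow hS.le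
      _ = P * S := mul_comm _ _
end

section
/- (Optimality of the ISI-MMSE beamformer, eqs. (21)–(22).) Let h, g_1, …, g_K ∈ ℂ^N with h ≠ 0, let P > 0 and σ² > 0, and let C : ℂ^N → ℂ^N be the positive-definite Hermitian operator C = ∑_{i=1}^K g_i g_i^H + (σ²/P)·I. Then γ_MMSE := Re(⟨h, C⁻¹ h⟩) is the greatest element of the set of SINR values |⟨h, f⟩|² / (∑_{i=1}^K |⟨g_i, f⟩|² + σ²) over all f ∈ ℂ^N with ‖f‖² ≤ P, and the maximum is attained by the MMSE beamformer f^MMSE = √P · C⁻¹ h / ‖C⁻¹ h‖. -/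
open scoped ComplexInnerProductSpace

section Aux

variable {N K : ℕ}

private noncomputable def Tmap (g : Fin K → EuclideanSpace ℂ (Fin N)) (c : ℝ) :
    EuclideanSpace ℂ (Fin N) →ₗ[ℂ] EuclideanSpace ℂ (Fin N) where
  toFun f := (∑ i, ⟪g i, f⟫ • g i) + (c : ℂ) • f
  map_add' x y := by
    simp only [inner_add_right, add_smul, Finset.sum_add_distrib, smul_add]
    abel
  map_smul' r x := by
    simp only [inner_smul_right, mul_smul, smul_add, Finset.smul_sum, RingHom.id_apply]
    rw [smul_comm r]

private lemma inner_Tmap (g : Fin K → EuclideanSpace ℂ (Fin N)) (c : ℝ)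
    (x y : EuclideanSpace ℂ (Fin N)) :
    ⟪x, Tmap g c y⟫ = (∑ i, ⟪g i, y⟫ * ⟪x, g i⟫) + (c : ℂ) * ⟪x, y⟫ := by
  show ⟪x, (∑ i, ⟪g i, y⟫ • g i) + (c : ℂ) • y⟫ = _
  simp only [inner_add_right, inner_sum, inner_smul_right]

private lemma Tmap_symm (g : Fin K → EuclideanSpace ℂ (Fin N)) (c : ℝ)
    (x y : EuclideanSpace ℂ (Fin N)) :
    ⟪Tmap g c x, y⟫ = ⟪x, Tmap g c y⟫ := by
  rw [← inner_conj_symm (Tmap g c x) y, inner_Tmap, inner_Tmap]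
  simp only [map_add, map_sum, map_mul, inner_conj_symm, Complex.conj_ofReal]
  congr 1
  exact Finset.sum_congr rfl fun i _ => mul_comm _ _

private lemma inner_Tmap_self (g : Fin K → EuclideanSpace ℂ (Fin N)) (c : ℝ)
    (x : EuclideanSpace ℂ (Fin N)) :
    ⟪x, Tmap g c x⟫ = (((∑ i, ‖⟪g i, x⟫‖ ^ 2) + c * ‖x‖ ^ 2 : ℝ) : ℂ) := by
  have h1 : ∀ i, ⟪g i, x⟫ * ⟪x, g i⟫ = ((‖⟪g i, x⟫‖ ^ 2 : ℝ) : ℂ) := fun i => by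
    rw [← inner_conj_symm x (g i), Complex.mul_conj, Complex.normSq_eq_norm_sq]
  rw [inner_Tmap]
  simp only [h1]
  rw [@inner_self_eq_norm_sq_to_K ℂ]
  push_cast
  norm_num

end Aux

/-- Optimality of the ISI-MMSE beamformer (eqs. (21)–(22)): with the positive-definite
Hermitian operator `C = ∑ i g_i g_i^H + (σ²/P) I` (applied below as
`f ↦ ∑ i ⟪g i, f⟫ • g i + (σ²/P) • f`), there is a vector `u = C⁻¹ h` (i.e. `C u = h`)
such that `γ_MMSE = Re ⟪h, C⁻¹ h⟫` is the greatest SINR value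
`|⟪h, f⟫|² / (∑ i |⟪g i, f⟫|² + σ²)` over all `f` with `‖f‖² ≤ P`, and the maximum is
attained by the MMSE beamformer `f = √P • C⁻¹ h / ‖C⁻¹ h‖`. -/
theorem stmt14 {N K : ℕ} (h : EuclideanSpace ℂ (Fin N)) (hh : h ≠ 0)
    (g : Fin K → EuclideanSpace ℂ (Fin N)) (P σ2 : ℝ) (hP : 0 < P) (hσ : 0 < σ2) :
    ∃ u : EuclideanSpace ℂ (Fin N),
      ((∑ i, ⟪g i, u⟫ • g i) + (σ2 / P) • u = h) ∧
      IsGreatest {x : ℝ | ∃ f : EuclideanSpace ℂ (Fin N), ‖f‖ ^ 2 ≤ P ∧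
          x = ‖⟪h, f⟫‖ ^ 2 / (∑ i, ‖⟪g i, f⟫‖ ^ 2 + σ2)} (⟪h, u⟫.re) ∧
      ‖⟪h, (Real.sqrt P / ‖u‖) • u⟫‖ ^ 2 /
          (∑ i, ‖⟪g i, (Real.sqrt P / ‖u‖) • u⟫‖ ^ 2 + σ2) = ⟪h, u⟫.re := by
  set c : ℝ := σ2 / P with hc
  have hcpos : 0 < c := div_pos hσ hP
  -- the quadratic form
  have hq_nonneg : ∀ x : EuclideanSpace ℂ (Fin N),
      0 ≤ (∑ i, ‖⟪g i, x⟫‖ ^ 2) + c * ‖x‖ ^ 2 := fun x =>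
    add_nonneg (Finset.sum_nonneg fun i _ => sq_nonneg _)
      (mul_nonneg hcpos.le (sq_nonneg _))
  have hq_def : ∀ x : EuclideanSpace ℂ (Fin N), x ≠ 0 →
      0 < (∑ i, ‖⟪g i, x⟫‖ ^ 2) + c * ‖x‖ ^ 2 := by
    intro x hx
    have h0 : 0 < c * ‖x‖ ^ 2 :=
      mul_pos hcpos (pow_pos (norm_pos_iff.mpr hx) 2)
    have h1 : 0 ≤ ∑ i, ‖⟪g i, x⟫‖ ^ 2 := Finset.sum_nonneg fun i _ => sq_nonneg _
    linarith
  have hself : ∀ x : EuclideanSpace ℂ (Fin N),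
      ⟪x, Tmap g c x⟫ = ((((∑ i, ‖⟪g i, x⟫‖ ^ 2) + c * ‖x‖ ^ 2 : ℝ)) : ℂ) := fun x =>
    inner_Tmap_self g c x
  -- T is injective hence surjective
  have hinj : Function.Injective (Tmap g c) := by
    rw [← LinearMap.ker_eq_bot, LinearMap.ker_eq_bot']
    intro m hm
    by_contra hm0
    have h2 := hself m
    rw [hm, inner_zero_right] at h2
    have h3 : (∑ i, ‖⟪g i, m⟫‖ ^ 2) + c * ‖m‖ ^ 2 = 0 := by exact_mod_cast h2.symm
    exact absurd h3 (ne_of_gt (hq_def m hm0))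
  obtain ⟨u, hu⟩ := (LinearMap.injective_iff_surjective.mp hinj) h
  have hTu : (∑ i, ⟪g i, u⟫ • g i) + (σ2 / P) • u = h := by
    rw [← Complex.coe_smul]
    exact hu
  have hu0 : u ≠ 0 := by
    rintro rfl
    rw [map_zero] at hu
    exact hh hu.symm
  set Q : ℝ := (∑ i, ‖⟪g i, u⟫‖ ^ 2) + c * ‖u‖ ^ 2 with hQ
  have hqu : 0 < Q := hq_def u hu0
  -- ⟪h, u⟫ = Q (real)
  have hhu : ⟪h, u⟫ = ((Q : ℝ) : ℂ) := by
    rw [← hu, Tmap_symm, hself]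
  have hhure : ⟪h, u⟫.re = Q := by rw [hhu]; simp
  -- Cauchy-Schwarz via InnerProductSpace.Core
  have CS : ∀ f : EuclideanSpace ℂ (Fin N),
      ‖⟪h, f⟫‖ ^ 2 ≤ Q * ((∑ i, ‖⟪g i, f⟫‖ ^ 2) + c * ‖f‖ ^ 2) := by
    intro f
    letI core : PreInnerProductSpace.Core ℂ (EuclideanSpace ℂ (Fin N)) :=
      { inner := fun x y => ⟪x, Tmap g c y⟫
        conj_inner_symm := fun x y => by
          show (starRingEnd ℂ) ⟪y, Tmap g c x⟫ = ⟪x, Tmap g c y⟫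
          rw [← Tmap_symm, inner_conj_symm]
        re_inner_nonneg := fun x => by
          show 0 ≤ Complex.re ⟪x, Tmap g c x⟫
          rw [hself x, Complex.ofReal_re]
          exact hq_nonneg x
        add_left := fun x y z => by
          show ⟪x + y, Tmap g c z⟫ = ⟪x, Tmap g c z⟫ + ⟪y, Tmap g c z⟫
          rw [inner_add_left]
        smul_left := fun x y r => by
          show ⟪r • x, Tmap g c y⟫ = (starRingEnd ℂ) r * ⟪x, Tmap g c y⟫
          rw [inner_smul_left] }
    have key := InnerProductSpace.Core.inner_mul_inner_self_le (𝕜 := ℂ) (c := core) u f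
    have e1 : ‖(core.inner u f : ℂ)‖ = ‖⟪h, f⟫‖ := by
      show ‖⟪u, Tmap g c f⟫‖ = ‖⟪h, f⟫‖
      rw [← Tmap_symm g c u f, hu]
    have e2 : ‖(core.inner f u : ℂ)‖ = ‖⟪h, f⟫‖ := by
      show ‖⟪f, Tmap g c u⟫‖ = ‖⟪h, f⟫‖
      rw [hu]
      exact norm_inner_symm _ _
    have e3 : Complex.re (core.inner u u : ℂ) = Q := by
      show Complex.re ⟪u, Tmap g c u⟫ = Q
      rw [hself u, Complex.ofReal_re]
    have e4 : Complex.re (core.inner f f : ℂ) = (∑ i, ‖⟪g i, f⟫‖ ^ 2) + c * ‖f‖ ^ 2 := by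
      show Complex.re ⟪f, Tmap g c f⟫ = _
      rw [hself f, Complex.ofReal_re]
    calc ‖⟪h, f⟫‖ ^ 2 = ‖(core.inner u f : ℂ)‖ * ‖(core.inner f u : ℂ)‖ := by
          rw [e1, e2]; ring
      _ ≤ Complex.re (core.inner u u : ℂ) * Complex.re (core.inner f f : ℂ) := key
      _ = Q * ((∑ i, ‖⟪g i, f⟫‖ ^ 2) + c * ‖f‖ ^ 2) := by rw [e3, e4]
  -- the value attained at f* = (√P/‖u‖) • u
  have hnu : (0 : ℝ) < ‖u‖ := norm_pos_iff.mpr hu0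
  set a : ℝ := Real.sqrt P / ‖u‖ with ha
  have hapos : 0 < a := div_pos (Real.sqrt_pos.mpr hP) hnu
  have ha2 : a ^ 2 = P / ‖u‖ ^ 2 := by
    rw [ha, div_pow, Real.sq_sqrt hP.le]
  have hattain : ‖⟪h, a • u⟫‖ ^ 2 / (∑ i, ‖⟪g i, a • u⟫‖ ^ 2 + σ2) = ⟪h, u⟫.re := by
    have hsm : ∀ x : EuclideanSpace ℂ (Fin N), ‖⟪x, a • u⟫‖ = a * ‖⟪x, u⟫‖ := by
      intro x
      rw [inner_smul_right_eq_smul]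
      simp [norm_smul, abs_of_pos hapos]
    have hden : ∑ i, ‖⟪g i, a • u⟫‖ ^ 2 + σ2 = a ^ 2 * Q := by
      have hσeq : σ2 = a ^ 2 * (c * ‖u‖ ^ 2) := by
        rw [ha2, hc]
        field_simp
      calc ∑ i, ‖⟪g i, a • u⟫‖ ^ 2 + σ2
          = ∑ i, (a * ‖⟪g i, u⟫‖) ^ 2 + σ2 := by
            simp only [hsm]
        _ = a ^ 2 * (∑ i, ‖⟪g i, u⟫‖ ^ 2) + a ^ 2 * (c * ‖u‖ ^ 2) := by
            rw [← hσeq, Finset.mul_sum]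
            congr 1
            exact Finset.sum_congr rfl fun i _ => by ring
        _ = a ^ 2 * Q := by rw [hQ]; ring
    rw [hden, hsm, hhure]
    have hQn : ‖⟪h, u⟫‖ = Q := by
      rw [hhu]
      simp [abs_of_nonneg hqu.le]
    rw [hQn, mul_pow, div_eq_iff (mul_pos (pow_pos hapos 2) hqu).ne']
    ring
  refine ⟨u, hTu, ⟨⟨a • u, ?_, ?_⟩, ?_⟩, hattain⟩
  · -- feasibility: ‖a • u‖^2 = P
    rw [norm_smul]
    simp only [Real.norm_eq_abs, abs_of_pos hapos]
    rw [mul_pow, ha2]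
    rw [div_mul_cancel₀]
    · positivity
  · exact hattain.symm
  · -- upper bound
    rintro x ⟨f, hf, rfl⟩
    have hdenpos : 0 < ∑ i, ‖⟪g i, f⟫‖ ^ 2 + σ2 := by
      have h0 : 0 ≤ ∑ i, ‖⟪g i, f⟫‖ ^ 2 := Finset.sum_nonneg fun i _ => sq_nonneg _
      linarith
    rw [div_le_iff₀ hdenpos, hhure]
    have h1 : (∑ i, ‖⟪g i, f⟫‖ ^ 2) + c * ‖f‖ ^ 2 ≤ ∑ i, ‖⟪g i, f⟫‖ ^ 2 + σ2 := by
      have h2 : c * ‖f‖ ^ 2 ≤ σ2 := by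
        rw [hc, div_mul_eq_mul_div, div_le_iff₀ hP]
        nlinarith
      linarith
    calc ‖⟪h, f⟫‖ ^ 2 ≤ Q * ((∑ i, ‖⟪g i, f⟫‖ ^ 2) + c * ‖f‖ ^ 2) := CS f
      _ ≤ Q * (∑ i, ‖⟪g i, f⟫‖ ^ 2 + σ2) := mul_le_mul_of_nonneg_left h1 hqu.le
end
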